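/- arXiv:1702.05318 — 4 statements merged into one kernel-verified Lean document; each statement's English description precedes it below -/
import Mathlib

section
/- In the setting of an Abelian extension 𝔭 = 𝔤 ⊕ 𝔞_P determined by (ω, η), let ξ : 𝔞_G → 𝔤 be injective linear, a : 𝔞_G → 𝔞_P a linear isomorphism, and ξ̊(Z) = (ξZ, aZ). Define γ : 𝔤 → 𝔤𝔩(𝔞_G) by γ(X) = a⁻¹(ω(ξ(·), X)) + a⁻¹ η(X) a. Then ξ̊(𝔞_G) is an ideal in 𝔭 if and only if [ξZ, X]_𝔤 = −ξ(γ(X)Z) for all X ∈ 𝔤, Z ∈ 𝔞_G, and η(ξZ)Y = 0 for all Y ∈ 𝔞_P, Z ∈ 𝔞_G. -/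
open Module

theorem LinearMap.mk_mem_range_prod_equiv_iff {R M N P : Type*} [Semiring R]
    [AddCommMonoid M] [AddCommMonoid N] [AddCommMonoid P] [Module R M] [Module R N] [Module R P]
    (f : M →ₗ[R] N) (e : M ≃ₗ[R] P) (x : N) (y : P) :
    (x, y) ∈ LinearMap.range (f.prod e) ↔ f (e.symm y) = x := by
  refine ⟨?_, fun h => ⟨e.symm y, by simp [h]⟩⟩
  rintro ⟨W, hW⟩
  obtain ⟨rfl, rfl⟩ := Prod.ext_iff.mp hW
  simp

theorem stmt3_general {g A AG : Type*} [LieRing g] [LieAlgebra ℝ g]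
    [AddCommGroup A] [Module ℝ A]
    [AddCommGroup AG] [Module ℝ AG]
    (η : g →ₗ[ℝ] Module.End ℝ A)
    (ω : g →ₗ[ℝ] g →ₗ[ℝ] A) (hskew : ∀ x y, ω x y = -ω y x)
    (B : g × A → g × A → g × A)
    (hB : ∀ p q : g × A, B p q = (⁅p.1, q.1⁆, -ω p.1 q.1 + η p.1 q.2 - η q.1 p.2))
    (ξ : AG →ₗ[ℝ] g) (hξ : Function.Injective ξ) (a : AG ≃ₗ[ℝ] A)
    (γ : g → AG → AG)
    (hγ : ∀ (X : g) (Z : AG), γ X Z = a.symm (ω (ξ Z) X) + a.symm (η X (a Z))) :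
    (∀ (p : g × A) (Z : AG),
        B p (ξ Z, a Z) ∈ Submodule.span ℝ (Set.range fun W : AG => ((ξ W, a W) : g × A))) ↔
      ((∀ (X : g) (Z : AG), ⁅ξ Z, X⁆ = -ξ (γ X Z)) ∧
        (∀ (Y : A) (Z : AG), η (ξ Z) Y = 0)) := by
  have hspan : Submodule.span ℝ (Set.range fun W : AG => ((ξ W, a W) : g × A)) =
      LinearMap.range (ξ.prod (a : AG →ₗ[ℝ] A)) :=
    Submodule.span_eq (LinearMap.range (ξ.prod (a : AG →ₗ[ℝ] A)))
  have hγ' : ∀ X Z, a.symm (-ω X (ξ Z) + η X (a Z)) = γ X Z := by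
    intro X Z
    rw [hγ, hskew, neg_neg, map_add]
  -- The condition now reads `ξ (γ X Z) + ξ (a⁻¹ (-η (ξ Z) Y)) = ⁅X, ξ Z⁆` for `p = (X, Y)`.
  simp only [hspan, hB, LinearMap.mk_mem_range_prod_equiv_iff, sub_eq_add_neg, map_add, hγ']
  constructor
  · intro h
    have hbracket : ∀ X Z, ξ (γ X Z) = ⁅X, ξ Z⁆ := fun X Z => by simpa using h (X, 0) Z
    refine ⟨fun X Z => by rw [hbracket, ← lie_skew], fun Y Z => ?_⟩
    have hker : ξ (a.symm (-η (ξ Z) Y)) = 0 := by simpa [hbracket] using h (0, Y) Z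
    simpa using hξ (hker.trans ξ.map_zero.symm)
  · rintro ⟨hbracket, hη⟩ p Z
    simp [hη, hbracket, ← lie_skew]

/-- in the Abelian extension `𝔭 = 𝔤 ⊕ 𝔞_P` determined by `(ω, η)`, with
`ξ : 𝔞_G → 𝔤` injective linear, `a : 𝔞_G ≃ 𝔞_P` and `ξ̊(Z) = (ξZ, aZ)`, define
`γ(X)Z = a⁻¹(ω(ξZ, X)) + a⁻¹(η(X)(aZ))`.  Then `ξ̊(𝔞_G)` is an ideal in `𝔭` iff
`[ξZ, X]_𝔤 = -ξ(γ(X)Z)` for all `X ∈ 𝔤, Z ∈ 𝔞_G`, and `η(ξZ)Y = 0` for all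
`Y ∈ 𝔞_P, Z ∈ 𝔞_G`. -/
theorem stmt3 {g A AG : Type*} [LieRing g] [LieAlgebra ℝ g] [FiniteDimensional ℝ g]
    [AddCommGroup A] [Module ℝ A] [FiniteDimensional ℝ A]
    [AddCommGroup AG] [Module ℝ AG] [FiniteDimensional ℝ AG]
    (hdim : finrank ℝ AG = finrank ℝ A)
    (η : g →ₗ[ℝ] Module.End ℝ A)
    (hrep : ∀ x y : g, η ⁅x, y⁆ = η x * η y - η y * η x)
    (ω : g →ₗ[ℝ] g →ₗ[ℝ] A) (hskew : ∀ x y, ω x y = -ω y x)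
    (hcocycle : ∀ x y z : g,
      η x (ω y z) - η y (ω x z) + η z (ω x y)
        - ω ⁅x, y⁆ z + ω ⁅x, z⁆ y - ω ⁅y, z⁆ x = 0)
    (B : g × A → g × A → g × A)
    (hB : ∀ p q : g × A, B p q = (⁅p.1, q.1⁆, -ω p.1 q.1 + η p.1 q.2 - η q.1 p.2))
    (ξ : AG →ₗ[ℝ] g) (hξ : Function.Injective ξ) (a : AG ≃ₗ[ℝ] A)
    (γ : g → AG → AG)
    (hγ : ∀ (X : g) (Z : AG), γ X Z = a.symm (ω (ξ Z) X) + a.symm (η X (a Z))) :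
    (∀ (p : g × A) (Z : AG),
        B p (ξ Z, a Z) ∈ Submodule.span ℝ (Set.range fun W : AG => ((ξ W, a W) : g × A))) ↔
      ((∀ (X : g) (Z : AG), ⁅ξ Z, X⁆ = -ξ (γ X Z)) ∧
        (∀ (Y : A) (Z : AG), η (ξ Z) Y = 0)) :=
  stmt3_general η ω hskew B hB ξ hξ a γ hγ
end

section
/- In the setting of the Lie algebra shear, suppose ξ̊(𝔞_G) is an Abelian ideal of 𝔭, so that [ξ(·), X]_𝔤 = −ξ ∘ γ(X) holds for all X ∈ 𝔤 where γ(X) = a⁻¹(ω(ξ(·),X)) + a⁻¹η(X)a and ξ is injective. Then γ : 𝔤 → 𝔤𝔩(𝔞_G) is a Lie algebra homomorphism, i.e. γ([X,Y]) = [γ(X), γ(Y)] for all X, Y ∈ 𝔤. -/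
open Module

/-- `ξ` identifies `γ X` with `ad X` restricted to the image of `ξ`, so the Jacobi identity
for `ad` transfers to `γ` through the injectivity of `ξ`. -/
theorem commutator_eq_of_injective_of_lie_eq_neg {L M : Type*} [LieRing L] [AddCommGroup M]
    (ξ : M →+ L) (hξ : Function.Injective ξ) (γ : L → M → M)
    (hbr : ∀ (X : L) (Z : M), ⁅ξ Z, X⁆ = -ξ (γ X Z)) (X Y : L) (Z : M) :
    γ ⁅X, Y⁆ Z = γ X (γ Y Z) - γ Y (γ X Z) := by
  have hξγ : ∀ (W : L) (Z : M), ξ (γ W Z) = ⁅W, ξ Z⁆ := fun W Z => by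
    rw [← lie_skew, hbr, neg_neg]
  apply hξ
  rw [map_sub, hξγ, hξγ, hξγ, hξγ, hξγ, lie_lie]

theorem stmt4_general {g AG : Type*} [LieRing g] [LieAlgebra ℝ g]
    [AddCommGroup AG] [Module ℝ AG]
    (ξ : AG →ₗ[ℝ] g) (hξ : Function.Injective ξ)
    (γ : g → AG → AG)
    -- so that in particular `[ξ(·), X]_𝔤 = -ξ ∘ γ(X)`:
    (hbr : ∀ (X : g) (Z : AG), ⁅ξ Z, X⁆ = -ξ (γ X Z)) :
    ∀ (X Y : g) (Z : AG), γ ⁅X, Y⁆ Z = γ X (γ Y Z) - γ Y (γ X Z) :=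
  commutator_eq_of_injective_of_lie_eq_neg ξ.toAddMonoidHom hξ γ hbr

/-- in the Lie algebra shear setting, if `ξ̊(𝔞_G)` is an Abelian ideal of
`𝔭 = 𝔤 ⊕ 𝔞_P`, so that `[ξZ, X]_𝔤 = -ξ(γ(X)Z)` holds, where
`γ(X)Z = a⁻¹(ω(ξZ,X)) + a⁻¹(η(X)(aZ))` and `ξ` is injective, then
`γ : 𝔤 → 𝔤𝔩(𝔞_G)` is a Lie algebra homomorphism: `γ([X,Y]) = [γ(X), γ(Y)]`. -/
theorem stmt4 {g A AG : Type*} [LieRing g] [LieAlgebra ℝ g] [FiniteDimensional ℝ g]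
    [AddCommGroup A] [Module ℝ A] [FiniteDimensional ℝ A]
    [AddCommGroup AG] [Module ℝ AG] [FiniteDimensional ℝ AG]
    (hdim : finrank ℝ AG = finrank ℝ A)
    (η : g →ₗ[ℝ] Module.End ℝ A)
    (hrep : ∀ x y : g, η ⁅x, y⁆ = η x * η y - η y * η x)
    (ω : g →ₗ[ℝ] g →ₗ[ℝ] A) (hskew : ∀ x y, ω x y = -ω y x)
    (hcocycle : ∀ x y z : g,
      η x (ω y z) - η y (ω x z) + η z (ω x y)
        - ω ⁅x, y⁆ z + ω ⁅x, z⁆ y - ω ⁅y, z⁆ x = 0)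
    (B : g × A → g × A → g × A)
    (hB : ∀ p q : g × A, B p q = (⁅p.1, q.1⁆, -ω p.1 q.1 + η p.1 q.2 - η q.1 p.2))
    (ξ : AG →ₗ[ℝ] g) (hξ : Function.Injective ξ) (a : AG ≃ₗ[ℝ] A)
    (γ : g → AG → AG)
    (hγ : ∀ (X : g) (Z : AG), γ X Z = a.symm (ω (ξ Z) X) + a.symm (η X (a Z)))
    -- `ξ̊(𝔞_G)` is an Abelian ideal of `𝔭`:
    (habelian : ∀ Z W : AG, B (ξ Z, a Z) (ξ W, a W) = 0)
    (hideal : ∀ (p : g × A) (Z : AG),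
      B p (ξ Z, a Z) ∈ Submodule.span ℝ (Set.range fun W : AG => ((ξ W, a W) : g × A)))
    -- so that in particular `[ξ(·), X]_𝔤 = -ξ ∘ γ(X)`:
    (hbr : ∀ (X : g) (Z : AG), ⁅ξ Z, X⁆ = -ξ (γ X Z)) :
    ∀ (X Y : g) (Z : AG), γ ⁅X, Y⁆ Z = γ X (γ Y Z) - γ Y (γ X Z) :=
  stmt4_general ξ hξ γ hbr
end

section
/- Every finite-dimensional real solvable Lie algebra of dimension n can be connected to the Abelian Lie algebra ℝⁿ by a finite sequence of Lie algebra shears, where a single shear step replaces a solvable Lie algebra 𝔰 of derived length r ≥ 2 by the direct sum (𝔰/𝔰⁽ʳ⁻¹⁾) ⊕ 𝔰⁽ʳ⁻¹⁾. More precisely, iterating this step r − 1 times starting from a solvable Lie algebra of derived length r yields an Abelian Lie algebra of the same dimension. -/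
/-!
If `𝔰⁽ʳ⁾ = 0 ≠ 𝔰⁽ʳ⁻¹⁾` with `r ≥ 2`, the shear `(𝔰/𝔰⁽ʳ⁻¹⁾) × 𝔰⁽ʳ⁻¹⁾` has derived length exactly
`r - 1`. The derived series of a product is computed componentwise; the ideal `𝔰⁽ʳ⁻¹⁾` is
abelian, and the quotient `𝔰/𝔰⁽ʳ⁻¹⁾` has derived length `r - 1`, because `𝔰⁽ʳ⁻²⁾ ≤ 𝔰⁽ʳ⁻¹⁾`
would force `𝔰⁽ʳ⁻¹⁾ ≤ 𝔰⁽ʳ⁾ = 0`. A shear along any ideal preserves the dimension, so `r - 1`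
shears lead from `𝔰` to an abelian Lie algebra of the same dimension.
-/

open Module LieAlgebra

section ProdLie

variable {R : Type*} [CommRing R] {L₁ L₂ : Type*} [LieRing L₁] [LieRing L₂]

/-- The product of two Lie rings, with componentwise bracket. -/
instance Prod.instLieRing : LieRing (L₁ × L₂) where
  bracket p q := (⁅p.1, q.1⁆, ⁅p.2, q.2⁆)
  add_lie x y z := by ext : 1 <;> exact add_lie _ _ _
  lie_add x y z := by ext : 1 <;> exact lie_add _ _ _
  lie_self x := by ext : 1 <;> exact lie_self _
  leibniz_lie x y z := by ext : 1 <;> exact leibniz_lie _ _ _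

/-- The product of two Lie algebras. -/
instance Prod.instLieAlgebra [LieAlgebra R L₁] [LieAlgebra R L₂] :
    LieAlgebra R (L₁ × L₂) where
  lie_smul t x y := by ext : 1 <;> exact lie_smul _ _ _

end ProdLie

/-- A bundled real Lie algebra. -/
structure LieAlgBundle where
  carrier : Type
  [lieRing : LieRing carrier]
  [lieAlg : LieAlgebra ℝ carrier]

attribute [instance] LieAlgBundle.lieRing LieAlgBundle.lieAlg

/-- One shear step: a solvable Lie algebra `𝔰` of derived length `r ≥ 2` is replaced by the
direct sum `(𝔰/𝔰⁽ʳ⁻¹⁾) ⊕ 𝔰⁽ʳ⁻¹⁾`, where `𝔰⁽ʳ⁻¹⁾` is the last nonzero term of the derived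
series of `𝔰`. -/
def ShearStep (A B : LieAlgBundle) : Prop :=
  ∃ r : ℕ, 2 ≤ r ∧
    derivedSeries ℝ A.carrier r = ⊥ ∧
    derivedSeries ℝ A.carrier (r - 1) ≠ ⊥ ∧
    Nonempty (B.carrier ≃ₗ⁅ℝ⁆
      (A.carrier ⧸ derivedSeries ℝ A.carrier (r - 1)) × ↥(derivedSeries ℝ A.carrier (r - 1)))

namespace LieIdeal

variable {R L : Type*} [CommRing R] [LieRing L] [LieAlgebra R L]

def quotientMk (I : LieIdeal R L) : L →ₗ⁅R⁆ L ⧸ I :=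
  { LieSubmodule.Quotient.mk' I with map_lie' := rfl }

theorem quotientMk_surjective (I : LieIdeal R L) : Function.Surjective I.quotientMk :=
  LieSubmodule.Quotient.surjective_mk' I

theorem ker_quotientMk (I : LieIdeal R L) : I.quotientMk.ker = I := by
  ext x
  exact LieSubmodule.Quotient.mk_eq_zero I

theorem rank_quotient_prod {K : Type*} [Field K] [LieAlgebra K L] (I : LieIdeal K L) :
    Module.rank K ((L ⧸ I) × I) = Module.rank K L :=
  rank_prod'.trans (rank_quotient_add_rank_of_divisionRing I.toSubmodule)

end LieIdeal

namespace LieAlgebra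

variable {R L L₁ L₂ : Type*} [CommRing R] [LieRing L] [LieAlgebra R L]
  [LieRing L₁] [LieAlgebra R L₁] [LieRing L₂] [LieAlgebra R L₂]

theorem isLieAbelian_of_derivedSeries_eq_bot {k : ℕ} (hk : k ≤ 1)
    (h : derivedSeries R L k = ⊥) : IsLieAbelian L := by
  have h₁ : derivedSeries R L 1 = ⊥ := le_bot_iff.mp (h ▸ derivedSeriesOfIdeal_antitone ⊤ hk)
  rw [derivedSeries_def, ← abelian_iff_derived_one_eq_bot] at h₁
  exact (lie_abelian_iff_equiv_lie_abelian LieIdeal.topEquiv).mp h₁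

theorem derivedSeries_quotient_eq_bot_iff (I : LieIdeal R L) (k : ℕ) :
    derivedSeries R (L ⧸ I) k = ⊥ ↔ derivedSeries R L k ≤ I := by
  rw [← LieIdeal.derivedSeries_map_eq k I.quotientMk_surjective, LieIdeal.map_eq_bot_iff,
    LieIdeal.ker_quotientMk]

theorem derivedSeries_prod_eq_bot_iff (k : ℕ) :
    derivedSeries R (L₁ × L₂) k = ⊥ ↔ derivedSeries R L₁ k = ⊥ ∧ derivedSeries R L₂ k = ⊥ := by
  have fst_eq := LieIdeal.derivedSeries_map_eq k
    (LieHom.fst_surjective (R := R) (L₁ := L₁) (L₂ := L₂))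
  have snd_eq := LieIdeal.derivedSeries_map_eq k
    (LieHom.snd_surjective (R := R) (L₁ := L₁) (L₂ := L₂))
  rw [← fst_eq, ← snd_eq, LieIdeal.map_eq_bot_iff, LieIdeal.map_eq_bot_iff]
  constructor
  · intro h
    simp only [h, bot_le, and_self]
  · rintro ⟨h₁, h₂⟩
    rw [eq_bot_iff]
    intro x hx
    exact Prod.ext (LieHom.mem_ker.mp (h₁ hx)) (LieHom.mem_ker.mp (h₂ hx))

theorem derivedSeries_derivedSeries_eq_bot_iff (j k : ℕ) :
    derivedSeries R (derivedSeries R L j) k = ⊥ ↔ derivedSeries R L (k + j) = ⊥ := by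
  rw [LieIdeal.derivedSeries_eq_bot_iff, ← derivedSeriesOfIdeal_add]

theorem derivedSeries_succ_le_of_le_succ {k : ℕ}
    (h : derivedSeries R L k ≤ derivedSeries R L (k + 1)) :
    derivedSeries R L (k + 1) ≤ derivedSeries R L (k + 2) := by
  simp only [derivedSeries_def, derivedSeriesOfIdeal_succ] at h ⊢
  exact LieSubmodule.mono_lie h h

theorem derivedSeries_shear_eq_bot {r : ℕ} (hr : 2 ≤ r) (hbot : derivedSeries R L r = ⊥) :
    derivedSeries R ((L ⧸ derivedSeries R L (r - 1)) × derivedSeries R L (r - 1)) (r - 1)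
      = ⊥ := by
  refine (derivedSeries_prod_eq_bot_iff _).mpr
    ⟨(derivedSeries_quotient_eq_bot_iff _ _).mpr le_rfl, ?_⟩
  rw [derivedSeries_derivedSeries_eq_bot_iff, ← le_bot_iff, ← hbot]
  exact derivedSeriesOfIdeal_antitone ⊤ (by omega)

theorem derivedSeries_shear_ne_bot {r : ℕ} (hr : 2 ≤ r) (hbot : derivedSeries R L r = ⊥)
    (hne : derivedSeries R L (r - 1) ≠ ⊥) :
    derivedSeries R ((L ⧸ derivedSeries R L (r - 1)) × derivedSeries R L (r - 1)) (r - 1 - 1)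
      ≠ ⊥ := by
  obtain ⟨k, rfl⟩ : ∃ k, r = k + 2 := ⟨r - 2, by omega⟩
  show derivedSeries R ((L ⧸ derivedSeries R L (k + 1)) × derivedSeries R L (k + 1)) k ≠ ⊥
  rw [Ne, derivedSeries_prod_eq_bot_iff, derivedSeries_quotient_eq_bot_iff]
  rintro ⟨hle, -⟩
  exact hne (le_bot_iff.mp (hbot ▸ derivedSeries_succ_le_of_le_succ hle))

end LieAlgebra

-- The `i`-th term has derived length `r - i`, so it is sheared along its `(r - i - 1)`-st
-- derived ideal.
def shearChain (L : Type) [LieRing L] [LieAlgebra ℝ L] (r : ℕ) : ℕ → LieAlgBundle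
  | 0 => ⟨L⟩
  | i + 1 =>
    let A := (shearChain L r i).carrier
    ⟨(A ⧸ derivedSeries ℝ A (r - i - 1)) × derivedSeries ℝ A (r - i - 1)⟩

section ShearChain

variable (L : Type) [LieRing L] [LieAlgebra ℝ L] (r : ℕ)

theorem rank_shearChain (i : ℕ) : Module.rank ℝ (shearChain L r i).carrier = Module.rank ℝ L := by
  induction i with
  | zero => rfl
  | succ i ih => exact (LieIdeal.rank_quotient_prod _).trans ih

variable {L r}

theorem derivedSeries_shearChain (hsolv : derivedSeries ℝ L r = ⊥)
    (hlen : derivedSeries ℝ L (r - 1) ≠ ⊥) (i : ℕ) (hi : i ≤ r - 1) :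
    derivedSeries ℝ (shearChain L r i).carrier (r - i) = ⊥ ∧
      derivedSeries ℝ (shearChain L r i).carrier (r - i - 1) ≠ ⊥ := by
  induction i with
  | zero => exact ⟨hsolv, hlen⟩
  | succ i ih =>
    obtain ⟨hbot, hne⟩ := ih (by omega)
    rw [Nat.sub_add_eq]
    exact ⟨derivedSeries_shear_eq_bot (by omega) hbot,
      derivedSeries_shear_ne_bot (by omega) hbot hne⟩

end ShearChain

theorem stmt6_general (L : Type) [LieRing L] [LieAlgebra ℝ L]
    (n r : ℕ) (hn : finrank ℝ L = n)
    (hsolv : derivedSeries ℝ L r = ⊥)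
    (hlen : derivedSeries ℝ L (r - 1) ≠ ⊥) :
    ∃ chain : ℕ → LieAlgBundle,
      Nonempty ((chain 0).carrier ≃ₗ⁅ℝ⁆ L) ∧
      (∀ i, i < r - 1 → ShearStep (chain i) (chain (i + 1))) ∧
      (∀ i, i ≤ r - 1 → finrank ℝ (chain i).carrier = n) ∧
      IsLieAbelian (chain (r - 1)).carrier := by
  refine ⟨shearChain L r, ⟨LieEquiv.refl⟩, fun i hi => ?_, fun i _ => ?_, ?_⟩
  · obtain ⟨hbot, hne⟩ := derivedSeries_shearChain hsolv hlen i (by omega)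
    exact ⟨r - i, by omega, hbot, hne, ⟨LieEquiv.refl⟩⟩
  · rw [← hn, finrank, finrank, rank_shearChain]
  · exact isLieAbelian_of_derivedSeries_eq_bot (by omega)
      (derivedSeries_shearChain hsolv hlen (r - 1) le_rfl).1

/-- every finite-dimensional real solvable Lie algebra of dimension `n` and
derived length `r` is connected to the Abelian Lie algebra `ℝⁿ` by a finite sequence of
shears: iterating the shear step `r - 1` times yields an Abelian Lie algebra of the same
dimension `n`. -/
theorem stmt6 (L : Type) [LieRing L] [LieAlgebra ℝ L] [FiniteDimensional ℝ L]
    (n r : ℕ) (hn : finrank ℝ L = n) (hr : 1 ≤ r)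
    (hsolv : derivedSeries ℝ L r = ⊥)
    (hlen : derivedSeries ℝ L (r - 1) ≠ ⊥) :
    ∃ chain : ℕ → LieAlgBundle,
      Nonempty ((chain 0).carrier ≃ₗ⁅ℝ⁆ L) ∧
      (∀ i, i < r - 1 → ShearStep (chain i) (chain (i + 1))) ∧
      (∀ i, i ≤ r - 1 → finrank ℝ (chain i).carrier = n) ∧
      IsLieAbelian (chain (r - 1)).carrier :=
  stmt6_general L n r hn hsolv hlen
end

section
/- Let M be a smooth manifold, π : P → M a surjective submersion, (F, ∇) a flat vector bundle over M, ρ : π*F → TP a vector bundle morphism and θ ∈ Ω¹(P, π*F) such that θ ∘ ρ = id_{π*F}, dπ ∘ ρ = 0, and d^∇θ = π*ω for some ω ∈ Ω²(M, F). Then for all sections f₁, f₂ ∈ Γ(π*F), the torsion-free identity [ρf₁, ρf₂] = ρ(∇_{ρf₁} f₂ − ∇_{ρf₂} f₁) holds. -/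
theorem stmt16_general {L Γ : Type*} [LieRing L] [LieAlgebra ℝ L]
    [AddCommGroup Γ] [Module ℝ Γ]
    (D : L →ₗ[ℝ] Γ →ₗ[ℝ] Γ)
    (ρ : Γ →ₗ[ℝ] L) (θ : L →ₗ[ℝ] Γ)
    (hθρ : ∀ f : Γ, θ (ρ f) = f)
    (hvert : ∀ f₁ f₂ : Γ, ρ (θ ⁅ρ f₁, ρ f₂⁆) = ⁅ρ f₁, ρ f₂⁆)
    (ω : L →ₗ[ℝ] L →ₗ[ℝ] Γ)
    (hω : ∀ (f : Γ) (v : L), ω (ρ f) v = 0)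
    (hdθ : ∀ v w : L, D v (θ w) - D w (θ v) - θ ⁅v, w⁆ = ω v w) :
    ∀ f₁ f₂ : Γ, ⁅ρ f₁, ρ f₂⁆ = ρ (D (ρ f₁) f₂ - D (ρ f₂) f₁) := by
  intro f₁ f₂
  have hdθ_vertical : D (ρ f₁) f₂ - D (ρ f₂) f₁ - θ ⁅ρ f₁, ρ f₂⁆ = 0 := by
    simpa only [hθρ, hω] using hdθ (ρ f₁) (ρ f₂)
  rw [← hvert f₁ f₂, ← sub_eq_zero.mp hdθ_vertical]

/-- let `π : P → M` be a surjective submersion, `(F,∇)` a flat vector bundle over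
`M`, `ρ : π*F → TP` a bundle morphism and `θ ∈ Ω¹(P, π*F)` with `θ∘ρ = id`, `dπ∘ρ = 0` and
`d^∇θ = π*ω` for some `ω ∈ Ω²(M,F)`.  Then the torsion-free identity
`[ρf₁, ρf₂] = ρ(∇_{ρf₁}f₂ - ∇_{ρf₂}f₁)` holds for all sections `f₁, f₂` of `π*F`.

We encode the Lie algebra of vector fields on `P` as `L`, the `ℝ`-module of sections of `π*F`
as `Γ`, the pulled-back flat connection as a bilinear map `D : L →ₗ[ℝ] Γ →ₗ[ℝ] Γ`,
`ρ : Γ →ₗ[ℝ] L` and `θ : L →ₗ[ℝ] Γ`.  The hypothesis `hvert` expresses that brackets of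
vertical vector fields are vertical (`ρ∘θ` is the projection onto `ker dπ = ρ(π*F)`), `hω`
that `π*ω` is horizontal (it vanishes on `ρ(π*F) = ker dπ`, since `dπ∘ρ = 0`), and `hdθ`
is `d^∇θ = π*ω` written out via `d^∇θ(X,Y) = ∇_X(θY) - ∇_Y(θX) - θ[X,Y]`. -/
theorem stmt16 {L Γ : Type*} [LieRing L] [LieAlgebra ℝ L]
    [AddCommGroup Γ] [Module ℝ Γ]
    (D : L →ₗ[ℝ] Γ →ₗ[ℝ] Γ)
    (hflat : ∀ (v w : L) (f : Γ), D v (D w f) - D w (D v f) - D ⁅v, w⁆ f = 0)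
    (ρ : Γ →ₗ[ℝ] L) (θ : L →ₗ[ℝ] Γ)
    (hθρ : ∀ f : Γ, θ (ρ f) = f)
    (hvert : ∀ f₁ f₂ : Γ, ρ (θ ⁅ρ f₁, ρ f₂⁆) = ⁅ρ f₁, ρ f₂⁆)
    (ω : L →ₗ[ℝ] L →ₗ[ℝ] Γ)
    (hω : ∀ (f : Γ) (v : L), ω (ρ f) v = 0)
    (hdθ : ∀ v w : L, D v (θ w) - D w (θ v) - θ ⁅v, w⁆ = ω v w) :
    ∀ f₁ f₂ : Γ, ⁅ρ f₁, ρ f₂⁆ = ρ (D (ρ f₁) f₂ - D (ρ f₂) f₁) :=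
  stmt16_general D ρ θ hθρ hvert ω hω hdθ
end
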